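/- arXiv:math/0511009 — 4 statements merged into one kernel-verified Lean document; each statement's English description precedes it below -/
import Mathlib

section
/- Let a₁ > a₂ > 0 and let Γ = {(x₁,x₂) ∈ ℝ² : x₁²/a₁² + x₂²/a₂² = 1}. Let A₀, A₁, A₂ ∈ Γ be pairwise distinct points satisfying the billiard reflection law at A₁: writing u = (A₁ − A₀)/‖A₁ − A₀‖ and n for the unit vector proportional to ((A₁)₁/a₁², (A₁)₂/a₂²) (the outward normal to Γ at A₁), one has (A₂ − A₁)/‖A₂ − A₁‖ = u − 2⟪u, n⟫ n. Suppose (p, q, r) ∈ ℝ³ with (p,q) ≠ (0,0) satisfies p x₁ + q x₂ = r at both A₀ and A₁, and suppose λ ∈ ℝ with λ ∉ {−a₁², −a₂²} satisfies (a₁² + λ) p² + (a₂² + λ) q² = r² (i.e., the line A₀A₁ is tangent to the confocal conic Γ_λ). Then any (p', q', r') ∈ ℝ³ with (p',q') ≠ (0,0) satisfying p' x₁ + q' x₂ = r' at both A₁ and A₂ also satisfies (a₁² + λ) p'² + (a₂² + λ) q'² = r'²; that is, the reflected segment A₁A₂ is tangent to the same confocal conic Γ_λ. -/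
/-!
A line through `x` with direction `v` is tangent to the confocal conic `Γ_λ` exactly when
`Q_x(v) = (a₂² + λ) v₀² + (a₁² + λ) v₁² - (v₁ x₀ - v₀ x₁)²` vanishes. This is a quadratic form
in `v`, and when `x ∈ Γ` the normal `(x₀ / a₁², x₁ / a₂²)` of `Γ` at `x` is an eigenvector of its
symmetric matrix. Hence `Q_x` is invariant under the reflection in the tangent line of `Γ` at `x`,
so the billiard reflection at `x` sends directions tangent to `Γ_λ` to directions tangent to `Γ_λ`.
-/

open RealInnerProductSpace

theorem LinearMap.IsSymmetric.inner_map_sub_two_inner_smul_self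
    {E : Type*} [NormedAddCommGroup E] [InnerProductSpace ℝ E] {T : E →ₗ[ℝ] E}
    (hT : T.IsSymmetric) {n : E} (hn : ‖n‖ = 1) {c : ℝ} (hTn : T n = c • n) (u : E) :
    ⟪T (u - (2 * ⟪u, n⟫) • n), u - (2 * ⟪u, n⟫) • n⟫ = ⟪T u, u⟫ := by
  have hnn : ⟪n, n⟫ = 1 := by rw [real_inner_self_eq_norm_sq, hn, one_pow]
  have hTun : ⟪T u, n⟫ = c * ⟪u, n⟫ := by rw [hT, hTn, inner_smul_right]
  simp only [map_sub, map_smul, hTn, inner_sub_left, inner_sub_right, inner_smul_left,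
    inner_smul_right, hnn, hTun, real_inner_comm n u, RCLike.conj_to_real]
  ring

theorem inner_map_smul_smul {E : Type*} [NormedAddCommGroup E] [InnerProductSpace ℝ E]
    (T : E →ₗ[ℝ] E) (t : ℝ) (v : E) : ⟪T (t • v), t • v⟫ = t ^ 2 * ⟪T v, v⟫ := by
  rw [map_smul, inner_smul_left, inner_smul_right, RCLike.conj_to_real]; ring

def confocalTangencyMatrix (a₁ a₂ lam : ℝ) (x : EuclideanSpace ℝ (Fin 2)) :
    Matrix (Fin 2) (Fin 2) ℝ :=
  !![a₂ ^ 2 + lam - x 1 ^ 2, x 0 * x 1; x 0 * x 1, a₁ ^ 2 + lam - x 0 ^ 2]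

theorem isSymmetric_confocalTangencyMatrix (a₁ a₂ lam : ℝ) (x : EuclideanSpace ℝ (Fin 2)) :
    (confocalTangencyMatrix a₁ a₂ lam x).toEuclideanLin.IsSymmetric := by
  rw [Matrix.isSymmetric_toEuclideanLin_iff]
  ext i j
  fin_cases i <;> fin_cases j <;> rfl

theorem inner_confocalTangencyMatrix_apply_self (a₁ a₂ lam : ℝ)
    (x v : EuclideanSpace ℝ (Fin 2)) :
    ⟪(confocalTangencyMatrix a₁ a₂ lam x).toEuclideanLin v, v⟫
      = (a₂ ^ 2 + lam) * v 0 ^ 2 + (a₁ ^ 2 + lam) * v 1 ^ 2 - (v 1 * x 0 - v 0 * x 1) ^ 2 := by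
  simp only [confocalTangencyMatrix, Matrix.toLpLin_apply, Matrix.cons_mulVec, dotProduct,
    Fin.sum_univ_two, Matrix.cons_val_zero, Matrix.cons_val_one, Matrix.cons_val_fin_one,
    Matrix.empty_mulVec, PiLp.inner_apply, RCLike.inner_apply, Real.ringHom_apply]
  ring

theorem exists_eq_mul_of_mul_add_mul_eq_zero {p q : ℝ} {v : EuclideanSpace ℝ (Fin 2)}
    (hv : v ≠ 0) (h : p * v 0 + q * v 1 = 0) : ∃ s : ℝ, p = s * v 1 ∧ q = -(s * v 0) := by
  have hv2 : v 0 ^ 2 + v 1 ^ 2 ≠ 0 := by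
    rw [← Fin.sum_univ_two (fun i => v i ^ 2), ← EuclideanSpace.real_norm_sq_eq]
    positivity
  refine ⟨(p * v 1 - q * v 0) / (v 0 ^ 2 + v 1 ^ 2), ?_, ?_⟩
  · field_simp; linear_combination v 0 * h
  · field_simp; linear_combination v 1 * h

theorem exists_confocalTangencyMatrix_apply_eq_smul {a₁ a₂ : ℝ} (ha₁ : a₁ ≠ 0) (ha₂ : a₂ ≠ 0)
    (lam : ℝ) {x n : EuclideanSpace ℝ (Fin 2)} (hx : x 0 ^ 2 / a₁ ^ 2 + x 1 ^ 2 / a₂ ^ 2 = 1)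
    {k : ℝ} (hn₀ : n 0 = k * (x 0 / a₁ ^ 2)) (hn₁ : n 1 = k * (x 1 / a₂ ^ 2)) :
    ∃ c : ℝ, (confocalTangencyMatrix a₁ a₂ lam x).toEuclideanLin n = c • n := by
  -- on `Γ` this eigenvalue also equals `a₁ ^ 2 + lam - (a₁ ^ 2 - a₂ ^ 2) * x 0 ^ 2 / a₁ ^ 2`
  refine ⟨a₂ ^ 2 + lam + (a₁ ^ 2 - a₂ ^ 2) * x 1 ^ 2 / a₂ ^ 2, ?_⟩
  ext i
  fin_cases i <;>
    simp only [confocalTangencyMatrix, Matrix.toLpLin_apply, Matrix.cons_mulVec, dotProduct,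
      Fin.sum_univ_two, Matrix.cons_val_zero, Matrix.cons_val_one, Matrix.cons_val_fin_one,
      Matrix.empty_mulVec, Fin.zero_eta, Fin.mk_one, PiLp.smul_apply, smul_eq_mul, hn₀, hn₁]
  · field_simp
    ring
  · field_simp
    field_simp at hx
    linear_combination x 1 * k * (a₂ ^ 2 - a₁ ^ 2) * hx

theorem tangent_confocal_iff_inner_confocalTangencyMatrix (a₁ a₂ lam : ℝ) {p q r : ℝ}
    (hpq : (p, q) ≠ (0, 0)) {b c : EuclideanSpace ℝ (Fin 2)} (hbc : b ≠ c)
    (hb : p * b 0 + q * b 1 = r) (hc : p * c 0 + q * c 1 = r) :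
    (a₁ ^ 2 + lam) * p ^ 2 + (a₂ ^ 2 + lam) * q ^ 2 = r ^ 2 ↔
      ⟪(confocalTangencyMatrix a₁ a₂ lam b).toEuclideanLin (c - b), c - b⟫ = 0 := by
  have horth : p * (c - b) 0 + q * (c - b) 1 = 0 := by
    simp only [PiLp.sub_apply]
    linear_combination hc - hb
  obtain ⟨s, hp, hq⟩ := exists_eq_mul_of_mul_add_mul_eq_zero (sub_ne_zero.2 hbc.symm) horth
  have hs : s ≠ 0 := by
    rintro rfl
    exact hpq (by simp [hp, hq])
  have key : (a₁ ^ 2 + lam) * p ^ 2 + (a₂ ^ 2 + lam) * q ^ 2 - r ^ 2 =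
      s ^ 2 * ⟪(confocalTangencyMatrix a₁ a₂ lam b).toEuclideanLin (c - b), c - b⟫ := by
    rw [inner_confocalTangencyMatrix_apply_self, ← hb, hp, hq]
    simp only [PiLp.sub_apply]
    ring
  rw [← sub_eq_zero, key, mul_eq_zero, or_iff_right (pow_ne_zero 2 hs)]

theorem billiard_in_ellipse_integrable_general
    (a₁ a₂ : ℝ) (ha : a₂ < a₁) (ha₂ : 0 < a₂)
    (A₀ A₁ A₂ : EuclideanSpace ℝ (Fin 2))
    (hA₁ : (A₁ 0) ^ 2 / a₁ ^ 2 + (A₁ 1) ^ 2 / a₂ ^ 2 = 1)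
    (h01 : A₀ ≠ A₁) (h12 : A₁ ≠ A₂)
    (n : EuclideanSpace ℝ (Fin 2)) (hn : ‖n‖ = 1)
    (hnprop : ∃ k : ℝ, 0 < k ∧ n 0 = k * (A₁ 0 / a₁ ^ 2) ∧ n 1 = k * (A₁ 1 / a₂ ^ 2))
    (hrefl : ‖A₂ - A₁‖⁻¹ • (A₂ - A₁) =
      ‖A₁ - A₀‖⁻¹ • (A₁ - A₀)
        - (2 * ⟪‖A₁ - A₀‖⁻¹ • (A₁ - A₀), n⟫) • n)
    (p q r : ℝ) (hpq : (p, q) ≠ (0, 0))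
    (hline0 : p * A₀ 0 + q * A₀ 1 = r) (hline1 : p * A₁ 0 + q * A₁ 1 = r)
    (lam : ℝ)
    (htan : (a₁ ^ 2 + lam) * p ^ 2 + (a₂ ^ 2 + lam) * q ^ 2 = r ^ 2) :
    ∀ p' q' r' : ℝ, (p', q') ≠ (0, 0) →
      p' * A₁ 0 + q' * A₁ 1 = r' → p' * A₂ 0 + q' * A₂ 1 = r' →
      (a₁ ^ 2 + lam) * p' ^ 2 + (a₂ ^ 2 + lam) * q' ^ 2 = r' ^ 2 := by
  intro p' q' r' hpq' hline1' hline2'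
  obtain ⟨k, -, hn₀, hn₁⟩ := hnprop
  set T := (confocalTangencyMatrix a₁ a₂ lam A₁).toEuclideanLin
  obtain ⟨c, hTn⟩ := exists_confocalTangencyMatrix_apply_eq_smul (ha₂.trans ha).ne' ha₂.ne' lam
    hA₁ hn₀ hn₁
  have hin : ⟪T (A₁ - A₀), A₁ - A₀⟫ = 0 := by
    rw [← neg_sub, map_neg, inner_neg_neg]
    exact (tangent_confocal_iff_inner_confocalTangencyMatrix a₁ a₂ lam hpq h01.symm
      hline1 hline0).1 htan
  have hout : ‖A₂ - A₁‖⁻¹ ^ 2 * ⟪T (A₂ - A₁), A₂ - A₁⟫ = 0 := by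
    rw [← inner_map_smul_smul, hrefl,
      (isSymmetric_confocalTangencyMatrix a₁ a₂ lam A₁).inner_map_sub_two_inner_smul_self hn hTn,
      inner_map_smul_smul, hin, mul_zero]
  have hw : ‖A₂ - A₁‖⁻¹ ^ 2 ≠ 0 := by
    simpa [sub_eq_zero] using h12.symm
  exact (tangent_confocal_iff_inner_confocalTangencyMatrix a₁ a₂ lam hpq' h12 hline1'
    hline2').2 ((mul_eq_zero.1 hout).resolve_left hw)

/-- Theorem 4 (integrability of the billiard in an ellipse): if the chord `A₀A₁`
of a billiard trajectory in the ellipse `Γ` is tangent to the confocal conic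
`Γ_λ`, then so is the reflected chord `A₁A₂`. -/
theorem billiard_in_ellipse_integrable
    (a₁ a₂ : ℝ) (ha : a₂ < a₁) (ha₂ : 0 < a₂)
    (A₀ A₁ A₂ : EuclideanSpace ℝ (Fin 2))
    (hA₀ : (A₀ 0) ^ 2 / a₁ ^ 2 + (A₀ 1) ^ 2 / a₂ ^ 2 = 1)
    (hA₁ : (A₁ 0) ^ 2 / a₁ ^ 2 + (A₁ 1) ^ 2 / a₂ ^ 2 = 1)
    (hA₂ : (A₂ 0) ^ 2 / a₁ ^ 2 + (A₂ 1) ^ 2 / a₂ ^ 2 = 1)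
    (h01 : A₀ ≠ A₁) (h12 : A₁ ≠ A₂) (h02 : A₀ ≠ A₂)
    (n : EuclideanSpace ℝ (Fin 2)) (hn : ‖n‖ = 1)
    (hnprop : ∃ k : ℝ, 0 < k ∧ n 0 = k * (A₁ 0 / a₁ ^ 2) ∧ n 1 = k * (A₁ 1 / a₂ ^ 2))
    (hrefl : ‖A₂ - A₁‖⁻¹ • (A₂ - A₁) =
      ‖A₁ - A₀‖⁻¹ • (A₁ - A₀)
        - (2 * ⟪‖A₁ - A₀‖⁻¹ • (A₁ - A₀), n⟫) • n)
    (p q r : ℝ) (hpq : (p, q) ≠ (0, 0))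
    (hline0 : p * A₀ 0 + q * A₀ 1 = r) (hline1 : p * A₁ 0 + q * A₁ 1 = r)
    (lam : ℝ) (hlam₁ : lam ≠ -a₁ ^ 2) (hlam₂ : lam ≠ -a₂ ^ 2)
    (htan : (a₁ ^ 2 + lam) * p ^ 2 + (a₂ ^ 2 + lam) * q ^ 2 = r ^ 2) :
    ∀ p' q' r' : ℝ, (p', q') ≠ (0, 0) →
      p' * A₁ 0 + q' * A₁ 1 = r' → p' * A₂ 0 + q' * A₂ 1 = r' →
      (a₁ ^ 2 + lam) * p' ^ 2 + (a₂ ^ 2 + lam) * q' ^ 2 = r' ^ 2 :=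
  billiard_in_ellipse_integrable_general a₁ a₂ ha ha₂ A₀ A₁ A₂ hA₁ h01 h12 n hn hnprop hrefl p q r
    hpq hline0 hline1 lam htan
end

section
/- Let a₁ > a₂ > 0 and let λ, μ > −a₂². Define A : ℝ² → ℝ², A(x₁, x₂) = (√((a₁² + μ)/(a₁² + λ)) · x₁, √((a₂² + μ)/(a₂² + λ)) · x₂). Let ν ∈ ℝ with ν ∉ {−a₁², −a₂², λ, μ}, and suppose P = (x₁, x₂) lies on the confocal ellipse Γ_λ (so x₁²/(a₁² + λ) + x₂²/(a₂² + λ) = 1) and also on the confocal conic Γ_ν (so x₁²/(a₁² + ν) + x₂²/(a₂² + ν) = 1). Then Q = A(P) lies on Γ_ν as well: writing Q = (X₁, X₂), one has X₁²/(a₁² + ν) + X₂²/(a₂² + ν) = 1. In other words, the Ivory map A_{λ,μ} between confocal ellipses preserves the confocal hyperbola through each point. -/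
/-- Lemma 5.1 (Ivory): the Ivory map `A_{λ,μ}` between confocal ellipses
preserves the confocal conic `Γ_ν` through each point. -/
theorem ivory_map_preserves_confocal_conic
    (a₁ a₂ lam mu : ℝ) (ha : a₂ < a₁) (ha₂ : 0 < a₂)
    (hlam : -a₂ ^ 2 < lam) (hmu : -a₂ ^ 2 < mu)
    (A : ℝ × ℝ → ℝ × ℝ)
    (hA : A = fun P => (Real.sqrt ((a₁ ^ 2 + mu) / (a₁ ^ 2 + lam)) * P.1,
                        Real.sqrt ((a₂ ^ 2 + mu) / (a₂ ^ 2 + lam)) * P.2))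
    (nu : ℝ) (hnu₁ : nu ≠ -a₁ ^ 2) (hnu₂ : nu ≠ -a₂ ^ 2)
    (hnul : nu ≠ lam) (hnum : nu ≠ mu)
    (x₁ x₂ : ℝ)
    (hPlam : x₁ ^ 2 / (a₁ ^ 2 + lam) + x₂ ^ 2 / (a₂ ^ 2 + lam) = 1)
    (hPnu : x₁ ^ 2 / (a₁ ^ 2 + nu) + x₂ ^ 2 / (a₂ ^ 2 + nu) = 1) :
    (A (x₁, x₂)).1 ^ 2 / (a₁ ^ 2 + nu) + (A (x₁, x₂)).2 ^ 2 / (a₂ ^ 2 + nu) = 1 := by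
  subst hA
  have ha12 : a₂ ^ 2 < a₁ ^ 2 := by nlinarith
  have hd2 : (0:ℝ) < a₂ ^ 2 + lam := by linarith
  have hd1 : (0:ℝ) < a₁ ^ 2 + lam := by linarith
  have hm2 : (0:ℝ) < a₂ ^ 2 + mu := by linarith
  have hm1 : (0:ℝ) < a₁ ^ 2 + mu := by linarith
  have he1 : a₁ ^ 2 + nu ≠ 0 := fun h => hnu₁ (by linarith)
  have he2 : a₂ ^ 2 + nu ≠ 0 := fun h => hnu₂ (by linarith)
  have hs1 : Real.sqrt ((a₁ ^ 2 + mu) / (a₁ ^ 2 + lam)) ^ 2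
      = (a₁ ^ 2 + mu) / (a₁ ^ 2 + lam) :=
    Real.sq_sqrt (by positivity)
  have hs2 : Real.sqrt ((a₂ ^ 2 + mu) / (a₂ ^ 2 + lam)) ^ 2
      = (a₂ ^ 2 + mu) / (a₂ ^ 2 + lam) :=
    Real.sq_sqrt (by positivity)
  simp only [mul_pow]
  rw [hs1, hs2]
  have hnl : nu - lam ≠ 0 := sub_ne_zero.mpr hnul
  field_simp at hPlam hPnu ⊢
  have key : (nu - lam) * (x₁ ^ 2 * ((a₂ ^ 2 + lam) * (a₂ ^ 2 + nu))
      + x₂ ^ 2 * ((a₁ ^ 2 + lam) * (a₁ ^ 2 + nu))) = 0 := by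
    linear_combination ((a₁ ^ 2 + nu) * (a₂ ^ 2 + nu)) * hPlam
      - ((a₁ ^ 2 + lam) * (a₂ ^ 2 + lam)) * hPnu
  have key' : x₁ ^ 2 * ((a₂ ^ 2 + lam) * (a₂ ^ 2 + nu))
      + x₂ ^ 2 * ((a₁ ^ 2 + lam) * (a₁ ^ 2 + nu)) = 0 :=
    by
      rcases mul_eq_zero.mp key with h | h
      · exact absurd h hnl
      · exact h
  linear_combination ((a₁ ^ 2 + nu) * (a₂ ^ 2 + nu)) * hPlam + (mu - nu) * key'
end

section
/- Let 0 < b < a and let E : ℝ → ℝ², E(t) = (a cos t, b sin t), parametrize the ellipse x²/a² + y²/b² = 1. Fix μ > 0 and let Γ_μ = {(x,y) : x²/(a² + μ) + y²/(b² + μ) = 1} be a confocal ellipse. Suppose s < t < s + π, the tangent line to the ellipse at E(s) and the tangent line at E(t) intersect at a point P, and P ∈ Γ_μ; suppose likewise s' < t' < s' + π with tangent lines at E(s'), E(t') meeting at P' ∈ Γ_μ. Then ‖P − E(s)‖ + ‖P − E(t)‖ − ∫ₛᵗ ‖E'(u)‖ du = ‖P' − E(s')‖ + ‖P' − E(t')‖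 − ∫_{s'}^{t'} ‖E'(u)‖ du. (Equivalently: the sum of the two tangent-segment lengths from a point of Γ_μ to the inner ellipse, plus the length of the far arc between the tangency points, is constant along Γ_μ — the Graves theorem on the string construction for confocal ellipses.) -/
/-!
Write `s = m - d`, `t = m + d`. The two tangent lines meet at `P = (a cos m, b sin m) / cos d`,
and `P - E (m ± d) = ± tan d • E' (m ± d)`. Put `Q m = a² sin² m + b² cos² m + μ` and
`k = √(μ / ((a² + μ)(b² + μ)))`. The condition `P ∈ Γ_μ` says `sin d = k √(Q m)`, and
under it the speed of the ellipse at both tangency points is rational in the data: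
`√(Q m) · ‖E' (m ± d)‖ = Q m cos d ± (a² - b²) sin d sin m cos m`. So the two tangent
segments add up to `2 k Q m`, the quantity of the theorem is
`2 k Q m - ∫_{m-d}^{m+d} ‖E'‖` with `d` a function of `m`, and its derivative in `m`
vanishes identically.
-/

open Real

namespace Graves

variable {a b mu : ℝ}

noncomputable def speedSq (a b u : ℝ) : ℝ := a ^ 2 * sin u ^ 2 + b ^ 2 * cos u ^ 2

noncomputable def ellipseSpeed (a b u : ℝ) : ℝ := √(speedSq a b u)

lemma speedSq_pos (ha : a ≠ 0) (hb : b ≠ 0) (u : ℝ) : 0 < speedSq a b u := by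
  have ha2 : 0 < a ^ 2 := by positivity
  have hb2 : 0 < b ^ 2 := by positivity
  unfold speedSq
  nlinarith [sin_sq_add_cos_sq u, sq_nonneg (sin u), sq_nonneg (cos u),
    mul_pos ha2 hb2, mul_nonneg ha2.le (sq_nonneg (sin u)), mul_nonneg hb2.le (sq_nonneg (cos u))]

lemma speedSq_le (a b u : ℝ) : speedSq a b u ≤ a ^ 2 + b ^ 2 := by
  unfold speedSq
  nlinarith [sin_sq_add_cos_sq u, mul_nonneg (sq_nonneg a) (sq_nonneg (cos u)),
    mul_nonneg (sq_nonneg b) (sq_nonneg (sin u))]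

lemma sq_mul_sin_mul_cos (a b u : ℝ) :
    ((a ^ 2 - b ^ 2) * sin u * cos u) ^ 2
      = (a ^ 2 + b ^ 2 - speedSq a b u) * speedSq a b u - a ^ 2 * b ^ 2 := by
  unfold speedSq
  linear_combination ((a ^ 2 + b ^ 2) * (a ^ 2 * sin u ^ 2 + b ^ 2 * cos u ^ 2)
    - a ^ 2 * b ^ 2 * (sin u ^ 2 + cos u ^ 2 + 1)) * sin_sq_add_cos_sq u

lemma speedSq_add (a b m d : ℝ) :
    speedSq a b (m + d) = cos d ^ 2 * speedSq a b m + sin d ^ 2 * (a ^ 2 + b ^ 2 - speedSq a b m)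
      + 2 * sin d * cos d * ((a ^ 2 - b ^ 2) * sin m * cos m) := by
  unfold speedSq
  rw [sin_add, cos_add]
  linear_combination (sin d ^ 2 * (a ^ 2 + b ^ 2)) * sin_sq_add_cos_sq m

lemma hasDerivAt_speedSq (a b u : ℝ) :
    HasDerivAt (speedSq a b) (2 * ((a ^ 2 - b ^ 2) * sin u * cos u)) u := by
  refine ((((hasDerivAt_sin u).pow 2).const_mul (a ^ 2)).add
    (((hasDerivAt_cos u).pow 2).const_mul (b ^ 2))).congr_deriv ?_
  ring

lemma continuous_ellipseSpeed (a b : ℝ) : Continuous (ellipseSpeed a b) := by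
  unfold ellipseSpeed speedSq
  fun_prop

lemma norm_deriv_eq_ellipseSpeed {E : ℝ → EuclideanSpace ℝ (Fin 2)}
    (hE0 : ∀ u, E u 0 = a * cos u) (hE1 : ∀ u, E u 1 = b * sin u) (u : ℝ) :
    ‖deriv E u‖ = ellipseSpeed a b u := by
  have hE : E = fun u => (a * cos u) • EuclideanSpace.single 0 1
      + (b * sin u) • EuclideanSpace.single 1 1 := by
    funext v
    ext i
    fin_cases i <;> simp [hE0, hE1]
  have hE' : HasDerivAt E ((-(a * sin u)) • EuclideanSpace.single 0 1
      + (b * cos u) • EuclideanSpace.single 1 1) u := by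
    rw [hE]
    refine ((((hasDerivAt_cos u).const_mul a).smul_const _).add
      (((hasDerivAt_sin u).const_mul b).smul_const _)).congr_deriv ?_
    simp only [mul_neg, neg_smul]
  rw [hE'.deriv, EuclideanSpace.norm_eq, ellipseSpeed, speedSq]
  simp [Fin.sum_univ_two, mul_pow]

lemma tangent_line_eq (ha : a ≠ 0) (hb : b ≠ 0) {x y u : ℝ}
    (h : (x - a * cos u) * (a * cos u / a ^ 2) + (y - b * sin u) * (b * sin u / b ^ 2) = 0) :
    b * cos u * x + a * sin u * y = a * b := by
  field_simp at h
  linear_combination h + a * b * sin_sq_add_cos_sq u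

lemma pole_eq (ha : a ≠ 0) (hb : b ≠ 0) {x y m d : ℝ} (hd : sin d ≠ 0)
    (hs : b * cos (m - d) * x + a * sin (m - d) * y = a * b)
    (ht : b * cos (m + d) * x + a * sin (m + d) * y = a * b) :
    x * cos d = a * cos m ∧ y * cos d = b * sin m := by
  rw [cos_sub, sin_sub] at hs
  rw [cos_add, sin_add] at ht
  have hsum : cos d * (b * cos m * x + a * sin m * y) = a * b := by
    linear_combination (hs + ht) / 2
  have hdiff : a * cos m * y = b * sin m * x :=
    mul_left_cancel₀ hd (by linear_combination (ht - hs) / 2)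
  constructor
  · refine mul_left_cancel₀ hb ?_
    linear_combination cos m * hsum - sin m * cos d * hdiff - b * x * cos d * sin_sq_add_cos_sq m
  · refine mul_left_cancel₀ ha ?_
    linear_combination sin m * hsum + cos m * cos d * hdiff - a * y * cos d * sin_sq_add_cos_sq m

lemma sub_eq_tan_mul {x y m d : ℝ} (hd : cos d ≠ 0)
    (hx : x * cos d = a * cos m) (hy : y * cos d = b * sin m) :
    x - a * cos (m + d) = tan d * (a * sin (m + d))
      ∧ y - b * sin (m + d) = -(tan d * (b * cos (m + d))) := by
  rw [tan_eq_sin_div_cos, cos_add, sin_add]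
  constructor
  · refine mul_right_cancel₀ hd ?_
    field_simp
    linear_combination hx - a * cos m * sin_sq_add_cos_sq d
  · refine mul_right_cancel₀ hd ?_
    field_simp
    linear_combination hy - b * sin m * sin_sq_add_cos_sq d

lemma norm_sub_eq_abs_tan_mul {E : ℝ → EuclideanSpace ℝ (Fin 2)}
    (hE0 : ∀ u, E u 0 = a * cos u) (hE1 : ∀ u, E u 1 = b * sin u)
    {P : EuclideanSpace ℝ (Fin 2)} {m d : ℝ} (hd : cos d ≠ 0)
    (hx : P 0 * cos d = a * cos m) (hy : P 1 * cos d = b * sin m) :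
    ‖P - E (m + d)‖ = |tan d| * ellipseSpeed a b (m + d) := by
  obtain ⟨h0, h1⟩ := sub_eq_tan_mul hd hx hy
  rw [EuclideanSpace.norm_eq, ellipseSpeed, speedSq, ← sqrt_sq_eq_abs, ← sqrt_mul (sq_nonneg _)]
  congr 1
  simp only [Fin.sum_univ_two, PiLp.sub_apply, norm_eq_abs, sq_abs, hE0, hE1, h0, h1]
  ring

lemma sin_sq_mul_eq_of_mem_confocal (ha : a ≠ 0) (hb : b ≠ 0) (hmu : 0 ≤ mu) {x y m d : ℝ}
    (hx : x * cos d = a * cos m) (hy : y * cos d = b * sin m)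
    (hP : x ^ 2 / (a ^ 2 + mu) + y ^ 2 / (b ^ 2 + mu) = 1) :
    sin d ^ 2 * ((a ^ 2 + mu) * (b ^ 2 + mu)) = mu * (speedSq a b m + mu) := by
  have hA : 0 < a ^ 2 + mu := by positivity
  have hB : 0 < b ^ 2 + mu := by positivity
  field_simp at hP
  have hcos : a ^ 2 * cos m ^ 2 * (b ^ 2 + mu) + b ^ 2 * sin m ^ 2 * (a ^ 2 + mu)
      = cos d ^ 2 * ((a ^ 2 + mu) * (b ^ 2 + mu)) := by
    linear_combination cos d ^ 2 * hP - (b ^ 2 + mu) * (x * cos d + a * cos m) * hx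
      - (a ^ 2 + mu) * (y * cos d + b * sin m) * hy
  unfold speedSq
  linear_combination (a ^ 2 + mu) * (b ^ 2 + mu) * sin_sq_add_cos_sq d + hcos
    - (a ^ 2 * b ^ 2 + mu * a ^ 2 + mu * b ^ 2) * sin_sq_add_cos_sq m

lemma ellipseSpeed_add_mul_sqrt (ha : a ≠ 0) (hb : b ≠ 0) (hmu : 0 ≤ mu) {m d : ℝ}
    (hd : 0 < cos d)
    (hsin : sin d ^ 2 * ((a ^ 2 + mu) * (b ^ 2 + mu)) = mu * (speedSq a b m + mu)) :
    ellipseSpeed a b (m + d) * √(speedSq a b m + mu)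
      = cos d * (speedSq a b m + mu) + sin d * ((a ^ 2 - b ^ 2) * sin m * cos m) := by
  set S := speedSq a b m
  set e := (a ^ 2 - b ^ 2) * sin m * cos m
  have hS : 0 < S := speedSq_pos ha hb m
  have he : e ^ 2 = (a ^ 2 + b ^ 2 - S) * S - a ^ 2 * b ^ 2 := sq_mul_sin_mul_cos a b m
  have hsq : speedSq a b (m + d) * (S + mu) = (cos d * (S + mu) + sin d * e) ^ 2 := by
    rw [speedSq_add]
    linear_combination (-sin d ^ 2) * he + hsin - mu * (S + mu) * sin_sq_add_cos_sq d
  -- `cos d * (S + mu) + sin d * e` is positive: its conjugate has positive product and sum with it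
  have hprod : 0 < (cos d * (S + mu) + sin d * e) * (cos d * (S + mu) - sin d * e) := by
    have hAB : 0 < (a ^ 2 + mu) * (b ^ 2 + mu) := by positivity
    have hpos : 0 < (S + mu) * (a ^ 2 * b ^ 2 * (S + 2 * mu) + mu ^ 2 * (a ^ 2 + b ^ 2 - S)) := by
      have : 0 < a ^ 2 * b ^ 2 := by positivity
      have : 0 ≤ a ^ 2 + b ^ 2 - S := by linarith [speedSq_le a b m]
      positivity
    have hid : (a ^ 2 + mu) * (b ^ 2 + mu)
        * ((cos d * (S + mu) + sin d * e) * (cos d * (S + mu) - sin d * e))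
        = (S + mu) * (a ^ 2 * b ^ 2 * (S + 2 * mu) + mu ^ 2 * (a ^ 2 + b ^ 2 - S)) := by
      linear_combination (a ^ 2 + mu) * (b ^ 2 + mu) * (S + mu) ^ 2 * sin_sq_add_cos_sq d
        - ((S + mu) ^ 2 + e ^ 2) * hsin - mu * (S + mu) * he
    exact pos_of_mul_pos_right (hid ▸ hpos) hAB.le
  have hX : 0 < cos d * (S + mu) + sin d * e := by
    nlinarith [mul_pos hd (show 0 < S + mu by positivity)]
  rw [ellipseSpeed, ← sqrt_mul (speedSq_pos ha hb _).le, hsq, sqrt_sq hX.le]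

lemma ellipseSpeed_sub_mul_sqrt (ha : a ≠ 0) (hb : b ≠ 0) (hmu : 0 ≤ mu) {m d : ℝ}
    (hd : 0 < cos d)
    (hsin : sin d ^ 2 * ((a ^ 2 + mu) * (b ^ 2 + mu)) = mu * (speedSq a b m + mu)) :
    ellipseSpeed a b (m - d) * √(speedSq a b m + mu)
      = cos d * (speedSq a b m + mu) - sin d * ((a ^ 2 - b ^ 2) * sin m * cos m) := by
  have h := ellipseSpeed_add_mul_sqrt ha hb hmu (d := -d) (by rwa [cos_neg])
    (by rwa [sin_neg, neg_sq])
  rwa [← sub_eq_add_neg, cos_neg, sin_neg, neg_mul, ← sub_eq_add_neg] at h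

lemma tan_mul_ellipseSpeed_sub_add_ellipseSpeed_add (ha : a ≠ 0) (hb : b ≠ 0) (hmu : 0 ≤ mu)
    {m d : ℝ} (hd : 0 < cos d)
    (hsin : sin d ^ 2 * ((a ^ 2 + mu) * (b ^ 2 + mu)) = mu * (speedSq a b m + mu)) :
    tan d * (ellipseSpeed a b (m - d) + ellipseSpeed a b (m + d))
      = 2 * sin d * √(speedSq a b m + mu) := by
  have hQ : 0 < speedSq a b m + mu := by linarith [speedSq_pos ha hb m]
  have hsqrt : 0 < √(speedSq a b m + mu) := sqrt_pos.2 hQ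
  have hplus := ellipseSpeed_add_mul_sqrt ha hb hmu hd hsin
  have hminus := ellipseSpeed_sub_mul_sqrt ha hb hmu hd hsin
  have hsum : ellipseSpeed a b (m - d) + ellipseSpeed a b (m + d)
      = 2 * cos d * √(speedSq a b m + mu) :=
    mul_right_cancel₀ hsqrt.ne'
      (by linear_combination hplus + hminus - 2 * cos d * sq_sqrt hQ.le)
  rw [hsum, tan_eq_sin_div_cos]
  field_simp

noncomputable def confocalFactor (a b mu : ℝ) : ℝ := √(mu / ((a ^ 2 + mu) * (b ^ 2 + mu)))

-- `(t - s) / 2` for the tangency points `s < t` of the point of `Γ_μ` with `(s + t) / 2 = m`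
noncomputable def halfAngle (a b mu m : ℝ) : ℝ :=
  arcsin (confocalFactor a b mu * √(speedSq a b m + mu))

noncomputable def tangentExcess (a b mu m : ℝ) : ℝ :=
  2 * confocalFactor a b mu * (speedSq a b m + mu)
    - ∫ u in (m - halfAngle a b mu m)..(m + halfAngle a b mu m), ellipseSpeed a b u

lemma confocalFactor_sq_mul (ha : a ≠ 0) (hb : b ≠ 0) (hmu : 0 ≤ mu) :
    confocalFactor a b mu ^ 2 * ((a ^ 2 + mu) * (b ^ 2 + mu)) = mu := by
  have hAB : 0 < (a ^ 2 + mu) * (b ^ 2 + mu) := by positivity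
  rw [confocalFactor, sq_sqrt (by positivity), div_mul_cancel₀ _ hAB.ne']

lemma confocalFactor_mul_sqrt_nonneg (a b mu m : ℝ) :
    0 ≤ confocalFactor a b mu * √(speedSq a b m + mu) := by
  unfold confocalFactor
  positivity

lemma sq_confocalFactor_mul_sqrt_lt_one (ha : a ≠ 0) (hb : b ≠ 0) (hmu : 0 ≤ mu) (m : ℝ) :
    (confocalFactor a b mu * √(speedSq a b m + mu)) ^ 2 < 1 := by
  have hS := speedSq_pos ha hb m
  have hAB : 0 < (a ^ 2 + mu) * (b ^ 2 + mu) := by positivity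
  rw [mul_pow, sq_sqrt (by linarith)]
  refine lt_of_mul_lt_mul_right ?_ hAB.le
  rw [one_mul, mul_right_comm, confocalFactor_sq_mul ha hb hmu]
  have hab : 0 < a ^ 2 * b ^ 2 := by positivity
  nlinarith [mul_nonneg hmu (sub_nonneg.2 (speedSq_le a b m))]

lemma sin_halfAngle (ha : a ≠ 0) (hb : b ≠ 0) (hmu : 0 ≤ mu) (m : ℝ) :
    sin (halfAngle a b mu m) = confocalFactor a b mu * √(speedSq a b m + mu) := by
  have h := sq_confocalFactor_mul_sqrt_lt_one ha hb hmu m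
  have h0 := confocalFactor_mul_sqrt_nonneg a b mu m
  exact sin_arcsin (by linarith) (by nlinarith)

lemma cos_halfAngle_pos (ha : a ≠ 0) (hb : b ≠ 0) (hmu : 0 ≤ mu) (m : ℝ) :
    0 < cos (halfAngle a b mu m) := by
  rw [halfAngle, cos_arcsin]
  exact sqrt_pos.2 (by linarith [sq_confocalFactor_mul_sqrt_lt_one ha hb hmu m])

lemma sin_halfAngle_sq_mul (ha : a ≠ 0) (hb : b ≠ 0) (hmu : 0 ≤ mu) (m : ℝ) :
    sin (halfAngle a b mu m) ^ 2 * ((a ^ 2 + mu) * (b ^ 2 + mu))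
      = mu * (speedSq a b m + mu) := by
  rw [sin_halfAngle ha hb hmu, mul_pow, sq_sqrt (by linarith [speedSq_pos ha hb m]),
    mul_right_comm, confocalFactor_sq_mul ha hb hmu]

lemma halfAngle_eq (ha : a ≠ 0) (hb : b ≠ 0) (hmu : 0 ≤ mu) {m d : ℝ} (hd0 : 0 ≤ d)
    (hd : d ≤ π / 2)
    (hsin : sin d ^ 2 * ((a ^ 2 + mu) * (b ^ 2 + mu)) = mu * (speedSq a b m + mu)) :
    halfAngle a b mu m = d := by
  have hAB : 0 < (a ^ 2 + mu) * (b ^ 2 + mu) := by positivity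
  have hsq : sin (halfAngle a b mu m) ^ 2 = sin d ^ 2 :=
    mul_right_cancel₀ hAB.ne' (by rw [sin_halfAngle_sq_mul ha hb hmu, hsin])
  refine injOn_sin ⟨neg_pi_div_two_le_arcsin _, arcsin_le_pi_div_two _⟩
    ⟨by linarith [pi_pos], hd⟩ ?_
  have h0 : 0 ≤ sin (halfAngle a b mu m) := by
    rw [sin_halfAngle ha hb hmu]
    exact confocalFactor_mul_sqrt_nonneg a b mu m
  exact (pow_left_inj₀ h0 (sin_nonneg_of_nonneg_of_le_pi hd0 (by linarith)) two_ne_zero).mp hsq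

lemma hasDerivAt_halfAngle (ha : a ≠ 0) (hb : b ≠ 0) (hmu : 0 ≤ mu) (m : ℝ) :
    HasDerivAt (halfAngle a b mu)
      (confocalFactor a b mu * ((a ^ 2 - b ^ 2) * sin m * cos m)
        / (√(speedSq a b m + mu) * cos (halfAngle a b mu m))) m := by
  have hQ : 0 < speedSq a b m + mu := by linarith [speedSq_pos ha hb m]
  have hx := sq_confocalFactor_mul_sqrt_lt_one ha hb hmu m
  have hx0 := confocalFactor_mul_sqrt_nonneg a b mu m
  have hsqrt := (((hasDerivAt_speedSq a b m).add_const mu).sqrt hQ.ne').const_mul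
    (confocalFactor a b mu)
  have h := (hasDerivAt_arcsin (by linarith) (by nlinarith)).comp m hsqrt
  rw [← cos_arcsin] at h
  refine h.congr_deriv ?_
  rw [halfAngle]
  field_simp

lemma hasDerivAt_tangentExcess (ha : a ≠ 0) (hb : b ≠ 0) (hmu : 0 ≤ mu) (m : ℝ) :
    HasDerivAt (tangentExcess a b mu) 0 m := by
  set k := confocalFactor a b mu
  set Q := speedSq a b m + mu
  set δ := halfAngle a b mu m
  set e := (a ^ 2 - b ^ 2) * sin m * cos m
  set Φ := fun x => ∫ u in (0 : ℝ)..x, ellipseSpeed a b u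
  have hΦ (x : ℝ) : HasDerivAt Φ (ellipseSpeed a b x) x :=
    ((continuous_ellipseSpeed a b).integral_hasStrictDerivAt 0 x).hasDerivAt
  have hfun : tangentExcess a b mu = fun m => 2 * k * (speedSq a b m + mu)
      - (Φ (m + halfAngle a b mu m) - Φ (m - halfAngle a b mu m)) := by
    funext x
    rw [tangentExcess, intervalIntegral.integral_interval_sub_left
      ((continuous_ellipseSpeed a b).intervalIntegrable _ _)
      ((continuous_ellipseSpeed a b).intervalIntegrable _ _)]
  have hδ := hasDerivAt_halfAngle ha hb hmu m
  have h := (((hasDerivAt_speedSq a b m).add_const mu).const_mul (2 * k)).sub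
    (((hΦ _).comp m ((hasDerivAt_id m).add hδ)).sub ((hΦ _).comp m ((hasDerivAt_id m).sub hδ)))
  rw [hfun]
  refine h.congr_deriv ?_
  have hQ : 0 < Q := by linarith [speedSq_pos ha hb m]
  have hc := cos_halfAngle_pos ha hb hmu m
  have hsin := sin_halfAngle_sq_mul ha hb hmu m
  have hplus : ellipseSpeed a b (m + δ) * √Q = cos δ * Q + sin δ * e :=
    ellipseSpeed_add_mul_sqrt ha hb hmu hc hsin
  have hminus : ellipseSpeed a b (m - δ) * √Q = cos δ * Q - sin δ * e :=
    ellipseSpeed_sub_mul_sqrt ha hb hmu hc hsin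
  have hσ : sin δ = k * √Q := sin_halfAngle ha hb hmu m
  have hδ' : k * e / (√Q * cos δ) * (√Q * cos δ) = k * e :=
    div_mul_cancel₀ _ (by positivity)
  simp only [Pi.add_apply, Pi.sub_apply, id]
  generalize k * e / (√Q * cos δ) = δ' at hδ' ⊢
  refine mul_right_cancel₀ (sqrt_pos.2 hQ).ne' ?_
  linear_combination (-(1 + δ')) * hplus + (1 - δ') * hminus - 2 * e * hσ
    + 2 * cos δ * δ' * sq_sqrt hQ.le - 2 * √Q * hδ'

lemma tangentExcess_eq (ha : a ≠ 0) (hb : b ≠ 0) (hmu : 0 ≤ mu) (x y : ℝ) :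
    tangentExcess a b mu x = tangentExcess a b mu y :=
  is_const_of_deriv_eq_zero (fun m => (hasDerivAt_tangentExcess ha hb hmu m).differentiableAt)
    (fun m => (hasDerivAt_tangentExcess ha hb hmu m).deriv) x y

lemma norm_add_norm_sub_integral_eq_tangentExcess (ha : a ≠ 0) (hb : b ≠ 0) (hmu : 0 ≤ mu)
    {E : ℝ → EuclideanSpace ℝ (Fin 2)}
    (hE0 : ∀ u, E u 0 = a * cos u) (hE1 : ∀ u, E u 1 = b * sin u)
    {s t : ℝ} (hst : s < t) (hts : t < s + π) {P : EuclideanSpace ℝ (Fin 2)}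
    (hPs : (P 0 - E s 0) * (a * cos s / a ^ 2) + (P 1 - E s 1) * (b * sin s / b ^ 2) = 0)
    (hPt : (P 0 - E t 0) * (a * cos t / a ^ 2) + (P 1 - E t 1) * (b * sin t / b ^ 2) = 0)
    (hPmu : P 0 ^ 2 / (a ^ 2 + mu) + P 1 ^ 2 / (b ^ 2 + mu) = 1) :
    ‖P - E s‖ + ‖P - E t‖ - ∫ u in s..t, ‖deriv E u‖
      = tangentExcess a b mu ((s + t) / 2) := by
  set m := (s + t) / 2
  set d := (t - s) / 2
  have hs : s = m - d := by ring
  have ht : t = m + d := by ring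
  have hd0 : 0 < d := by linarith
  have hdπ : d < π / 2 := by linarith
  have hsin_pos : 0 < sin d := sin_pos_of_pos_of_lt_pi hd0 (by linarith [pi_pos])
  have hcos_pos : 0 < cos d := cos_pos_of_mem_Ioo ⟨by linarith, hdπ⟩
  rw [hE0, hE1] at hPs hPt
  obtain ⟨hx, hy⟩ := pole_eq ha hb hsin_pos.ne' (hs ▸ tangent_line_eq ha hb hPs)
    (ht ▸ tangent_line_eq ha hb hPt)
  have hsin := sin_sq_mul_eq_of_mem_confocal ha hb hmu hx hy hPmu
  have hδ : halfAngle a b mu m = d := halfAngle_eq ha hb hmu hd0.le hdπ.le hsin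
  have htan : |tan d| = tan d := abs_of_pos (tan_pos_of_pos_of_lt_pi_div_two hd0 hdπ)
  have hnorm_s : ‖P - E s‖ = tan d * ellipseSpeed a b (m - d) := by
    have hx' : P 0 * cos (-d) = a * cos m := by rwa [cos_neg]
    have hy' : P 1 * cos (-d) = b * sin m := by rwa [cos_neg]
    have hc' : cos (-d) ≠ 0 := by rw [cos_neg]; exact hcos_pos.ne'
    rw [hs, sub_eq_add_neg m d, norm_sub_eq_abs_tan_mul hE0 hE1 hc' hx' hy', tan_neg, abs_neg,
      htan]
  have hnorm_t : ‖P - E t‖ = tan d * ellipseSpeed a b (m + d) := by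
    rw [ht, norm_sub_eq_abs_tan_mul hE0 hE1 hcos_pos.ne' hx hy, htan]
  have hlengths :
      ‖P - E s‖ + ‖P - E t‖ = 2 * confocalFactor a b mu * (speedSq a b m + mu) := by
    rw [hnorm_s, hnorm_t, ← mul_add,
      tan_mul_ellipseSpeed_sub_add_ellipseSpeed_add ha hb hmu hcos_pos hsin, ← hδ,
      sin_halfAngle ha hb hmu, mul_assoc 2, mul_assoc,
      mul_self_sqrt (by linarith [speedSq_pos ha hb m]), mul_assoc]
  rw [tangentExcess, hδ, ← hs, ← ht, hlengths,
    intervalIntegral.integral_congr (fun u _ => norm_deriv_eq_ellipseSpeed hE0 hE1 u)]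

end Graves

/-- Graves's theorem (quantitative string form): for points `P` on a fixed
confocal ellipse `Γ_μ`, the sum of the two tangent-segment lengths to the inner
ellipse minus the arc length between the tangency points is constant. -/
theorem graves_string_construction
    (a b mu : ℝ) (hb : 0 < b) (hab : b < a) (hmu : 0 < mu)
    (E : ℝ → EuclideanSpace ℝ (Fin 2))
    (hE0 : ∀ u, E u 0 = a * Real.cos u) (hE1 : ∀ u, E u 1 = b * Real.sin u)
    (s t s' t' : ℝ)
    (hst : s < t) (hstπ : t < s + π) (hst' : s' < t') (hst'π : t' < s' + π)
    (P P' : EuclideanSpace ℝ (Fin 2))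
    (hPs : (P 0 - E s 0) * (a * Real.cos s / a ^ 2)
            + (P 1 - E s 1) * (b * Real.sin s / b ^ 2) = 0)
    (hPt : (P 0 - E t 0) * (a * Real.cos t / a ^ 2)
            + (P 1 - E t 1) * (b * Real.sin t / b ^ 2) = 0)
    (hPmu : (P 0) ^ 2 / (a ^ 2 + mu) + (P 1) ^ 2 / (b ^ 2 + mu) = 1)
    (hP's : (P' 0 - E s' 0) * (a * Real.cos s' / a ^ 2)
            + (P' 1 - E s' 1) * (b * Real.sin s' / b ^ 2) = 0)
    (hP't : (P' 0 - E t' 0) * (a * Real.cos t' / a ^ 2)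
            + (P' 1 - E t' 1) * (b * Real.sin t' / b ^ 2) = 0)
    (hP'mu : (P' 0) ^ 2 / (a ^ 2 + mu) + (P' 1) ^ 2 / (b ^ 2 + mu) = 1) :
    ‖P - E s‖ + ‖P - E t‖ - ∫ u in s..t, ‖deriv E u‖ =
      ‖P' - E s'‖ + ‖P' - E t'‖ - ∫ u in s'..t', ‖deriv E u‖ := by
  have ha : a ≠ 0 := (hb.trans hab).ne'
  rw [Graves.norm_add_norm_sub_integral_eq_tangentExcess ha hb.ne' hmu.le hE0 hE1 hst hstπ
      hPs hPt hPmu,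
    Graves.norm_add_norm_sub_integral_eq_tangentExcess ha hb.ne' hmu.le hE0 hE1 hst' hst'π
      hP's hP't hP'mu]
  exact Graves.tangentExcess_eq ha hb.ne' hmu.le _ _
end

section
/- Let a₁ > a₂ > 0 and μ > 0. Let γ = {(x₁,x₂) : x₁²/a₁² + x₂²/a₂² = 1} and let P = (p₁, p₂) lie on the confocal ellipse Γ_μ = {(x₁,x₂) : x₁²/(a₁² + μ) + x₂²/(a₂² + μ) = 1} (so P is outside γ). Let A = (A₁, A₂) and B = (B₁, B₂) be distinct points of γ with ⟪P − A, (A₁/a₁², A₂/a₂²)⟫ = 0 and ⟪P − B, (B₁/a₁², B₂/a₂²)⟫ = 0 (i.e., PA and PB are the two tangent lines from P to γ). Let N = (p₁/(a₁² + μ), p₂/(a₂² + μ)) be the normal vector to Γ_μ at P. Then ⟪(A − P)/‖A − P‖, N⟫ = ⟪(B − P)/‖B − P‖, N⟫; that is, the normal to the confocal ellipse Γ_μ at P bisects the angle between the two tangent segments from P to γ, so the two tangent lines make equal angles with Γ_μ. -/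
/-!
Let `g = (A₀/a₁², A₁/a₂²)` be the normal of `γ` at a tangency point `A`. Tangency and `A ∈ γ`
give `⟪P, g⟫ = 1` and `a₁²g₀² + a₂²g₁² = 1`; with `P ∈ Γ_μ`, Lagrange's identity for the weights
`aᵢ² + μ` turns these into `(a₁² + μ)(a₂² + μ)(g₀N₁ - g₁N₀)² = μ‖g‖²`. As `A - P` is orthogonal
to `g` in the plane, the squared cosine of the angle between `A - P` and `N` is therefore
`μ / ((a₁² + μ)(a₂² + μ))`, independently of `A`. The cosine itself is negative because `γ` lies
strictly inside the convex region bounded by `Γ_μ`.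
-/

open RealInnerProductSpace

lemma EuclideanSpace.real_inner_fin_two (x y : EuclideanSpace ℝ (Fin 2)) :
    ⟪x, y⟫ = x 0 * y 0 + x 1 * y 1 := by
  simp [PiLp.inner_apply, Fin.sum_univ_two, mul_comm]

lemma EuclideanSpace.real_norm_sq_fin_two (x : EuclideanSpace ℝ (Fin 2)) :
    ‖x‖ ^ 2 = x 0 ^ 2 + x 1 ^ 2 := by
  simp [EuclideanSpace.real_norm_sq_eq, Fin.sum_univ_two]

lemma real_inner_inv_norm_smul_eq_neg_sqrt {E : Type*} [NormedAddCommGroup E]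
    [InnerProductSpace ℝ E] {u n : E} {k : ℝ} (hneg : ⟪u, n⟫ < 0)
    (hsq : ⟪u, n⟫ ^ 2 = k * ‖u‖ ^ 2) : ⟪‖u‖⁻¹ • u, n⟫ = -√k := by
  have hu : 0 < ‖u‖ := norm_pos_iff.2 fun h ↦ by simp [h] at hneg
  have hk : k = (⟪u, n⟫ / ‖u‖) ^ 2 := by
    field_simp
    exact hsq.symm
  rw [real_inner_smul_left, hk, Real.sqrt_sq_eq_abs, abs_of_neg (div_neg_of_neg_of_pos hneg hu),
    inv_mul_eq_div, neg_neg]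

lemma sq_dot_mul_normSq_of_dot_eq_zero {u₀ u₁ g₀ g₁ n₀ n₁ : ℝ} (h : u₀ * g₀ + u₁ * g₁ = 0) :
    (u₀ * n₀ + u₁ * n₁) ^ 2 * (g₀ ^ 2 + g₁ ^ 2) = (g₀ * n₁ - g₁ * n₀) ^ 2 * (u₀ ^ 2 + u₁ ^ 2) := by
  linear_combination (2 * (u₀ * n₀ + u₁ * n₁) * (g₀ * n₀ + g₁ * n₁)
    - (u₀ * g₀ + u₁ * g₁) * (n₀ ^ 2 + n₁ ^ 2)) * h

lemma confocal_mul_cross_sq {a₁ a₂ μ n₀ n₁ g₀ g₁ : ℝ}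
    (hn : (a₁ ^ 2 + μ) * n₀ ^ 2 + (a₂ ^ 2 + μ) * n₁ ^ 2 = 1)
    (hpolar : (a₁ ^ 2 + μ) * n₀ * g₀ + (a₂ ^ 2 + μ) * n₁ * g₁ = 1)
    (hdual : a₁ ^ 2 * g₀ ^ 2 + a₂ ^ 2 * g₁ ^ 2 = 1) :
    (a₁ ^ 2 + μ) * (a₂ ^ 2 + μ) * (g₀ * n₁ - g₁ * n₀) ^ 2 = μ * (g₀ ^ 2 + g₁ ^ 2) := by
  linear_combination ((a₁ ^ 2 + μ) * g₀ ^ 2 + (a₂ ^ 2 + μ) * g₁ ^ 2) * hn + hdual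
    - ((a₁ ^ 2 + μ) * n₀ * g₀ + (a₂ ^ 2 + μ) * n₁ * g₁ + 1) * hpolar

lemma confocal_lt_one_of_eq_one {a₁ a₂ μ x₀ x₁ : ℝ} (h₁ : a₁ ≠ 0) (h₂ : a₂ ≠ 0) (hμ : 0 < μ)
    (hx : x₀ ^ 2 / a₁ ^ 2 + x₁ ^ 2 / a₂ ^ 2 = 1) :
    x₀ ^ 2 / (a₁ ^ 2 + μ) + x₁ ^ 2 / (a₂ ^ 2 + μ) < 1 := by
  have hlt₁ : a₁ ^ 2 < a₁ ^ 2 + μ := lt_add_of_pos_right _ hμ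
  have hlt₂ : a₂ ^ 2 < a₂ ^ 2 + μ := lt_add_of_pos_right _ hμ
  rcases eq_or_ne x₀ 0 with rfl | hx₀
  · rw [zero_pow two_ne_zero, zero_div, zero_add] at hx ⊢
    have hx₁ : x₁ ≠ 0 := by rintro rfl; simp at hx
    exact hx ▸ div_lt_div_of_pos_left (by positivity) (by positivity) hlt₂
  · calc x₀ ^ 2 / (a₁ ^ 2 + μ) + x₁ ^ 2 / (a₂ ^ 2 + μ)
        < x₀ ^ 2 / a₁ ^ 2 + x₁ ^ 2 / a₂ ^ 2 := add_lt_add_of_lt_of_le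
          (div_lt_div_of_pos_left (by positivity) (by positivity) hlt₁)
          (div_le_div_of_nonneg_left (sq_nonneg _) (by positivity) hlt₂.le)
      _ = 1 := hx

lemma inner_sub_normal_neg {c₁ c₂ : ℝ} {P Q N : EuclideanSpace ℝ (Fin 2)} (hc₁ : 0 < c₁)
    (hc₂ : 0 < c₂) (hP : P 0 ^ 2 / c₁ + P 1 ^ 2 / c₂ = 1) (hQ : Q 0 ^ 2 / c₁ + Q 1 ^ 2 / c₂ < 1)
    (hN₀ : N 0 = P 0 / c₁) (hN₁ : N 1 = P 1 / c₂) : ⟪Q - P, N⟫ < 0 := by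
  rw [EuclideanSpace.real_inner_fin_two, hN₀, hN₁]
  simp only [PiLp.sub_apply, div_eq_mul_inv] at *
  nlinarith [mul_nonneg (sq_nonneg (Q 0 - P 0)) (inv_nonneg.2 hc₁.le),
    mul_nonneg (sq_nonneg (Q 1 - P 1)) (inv_nonneg.2 hc₂.le)]

section Tangent

variable {a₁ a₂ μ : ℝ} {P A N : EuclideanSpace ℝ (Fin 2)}

lemma inner_tangent_normal_sq (hc₁ : a₁ ^ 2 + μ ≠ 0) (hc₂ : a₂ ^ 2 + μ ≠ 0)
    (hP : P 0 ^ 2 / (a₁ ^ 2 + μ) + P 1 ^ 2 / (a₂ ^ 2 + μ) = 1)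
    (hA : A 0 ^ 2 / a₁ ^ 2 + A 1 ^ 2 / a₂ ^ 2 = 1)
    (htan : (P 0 - A 0) * (A 0 / a₁ ^ 2) + (P 1 - A 1) * (A 1 / a₂ ^ 2) = 0)
    (hN₀ : N 0 = P 0 / (a₁ ^ 2 + μ)) (hN₁ : N 1 = P 1 / (a₂ ^ 2 + μ)) :
    (a₁ ^ 2 + μ) * (a₂ ^ 2 + μ) * ⟪A - P, N⟫ ^ 2 = μ * ‖A - P‖ ^ 2 := by
  have hn : (a₁ ^ 2 + μ) * N 0 ^ 2 + (a₂ ^ 2 + μ) * N 1 ^ 2 = 1 := by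
    rw [hN₀, hN₁, ← hP]
    field_simp
  have hpolar : (a₁ ^ 2 + μ) * N 0 * (A 0 / a₁ ^ 2) + (a₂ ^ 2 + μ) * N 1 * (A 1 / a₂ ^ 2) = 1 := by
    rw [hN₀, hN₁, mul_div_cancel₀ _ hc₁, mul_div_cancel₀ _ hc₂]
    linear_combination htan + hA
  have hdual : a₁ ^ 2 * (A 0 / a₁ ^ 2) ^ 2 + a₂ ^ 2 * (A 1 / a₂ ^ 2) ^ 2 = 1 := by
    rw [← hA]
    field_simp
  have hg : (A 0 / a₁ ^ 2) ^ 2 + (A 1 / a₂ ^ 2) ^ 2 ≠ 0 := by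
    intro h
    obtain ⟨hg₀, hg₁⟩ := (add_eq_zero_iff_of_nonneg (sq_nonneg _) (sq_nonneg _)).1 h
    rw [pow_eq_zero_iff two_ne_zero] at hg₀ hg₁
    simp [hg₀, hg₁] at hpolar
  have hperp := sq_dot_mul_normSq_of_dot_eq_zero (n₀ := N 0) (n₁ := N 1)
    (show (A 0 - P 0) * (A 0 / a₁ ^ 2) + (A 1 - P 1) * (A 1 / a₂ ^ 2) = 0 by
      linear_combination -htan)
  have hcross := confocal_mul_cross_sq hn hpolar hdual
  rw [EuclideanSpace.real_inner_fin_two, EuclideanSpace.real_norm_sq_fin_two]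
  simp only [PiLp.sub_apply]
  refine mul_right_cancel₀ hg ?_
  linear_combination (a₁ ^ 2 + μ) * (a₂ ^ 2 + μ) * hperp
    + ((A 0 - P 0) ^ 2 + (A 1 - P 1) ^ 2) * hcross

theorem inner_unit_tangent_normal_eq (h₁ : a₁ ≠ 0) (h₂ : a₂ ≠ 0) (hμ : 0 < μ)
    (hP : P 0 ^ 2 / (a₁ ^ 2 + μ) + P 1 ^ 2 / (a₂ ^ 2 + μ) = 1)
    (hA : A 0 ^ 2 / a₁ ^ 2 + A 1 ^ 2 / a₂ ^ 2 = 1)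
    (htan : (P 0 - A 0) * (A 0 / a₁ ^ 2) + (P 1 - A 1) * (A 1 / a₂ ^ 2) = 0)
    (hN₀ : N 0 = P 0 / (a₁ ^ 2 + μ)) (hN₁ : N 1 = P 1 / (a₂ ^ 2 + μ)) :
    ⟪‖A - P‖⁻¹ • (A - P), N⟫ = -√(μ / ((a₁ ^ 2 + μ) * (a₂ ^ 2 + μ))) := by
  have hc₁ : 0 < a₁ ^ 2 + μ := by positivity
  have hc₂ : 0 < a₂ ^ 2 + μ := by positivity
  refine real_inner_inv_norm_smul_eq_neg_sqrt
    (inner_sub_normal_neg hc₁ hc₂ hP (confocal_lt_one_of_eq_one h₁ h₂ hμ hA) hN₀ hN₁) ?_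
  rw [div_mul_eq_mul_div, eq_div_iff (by positivity)]
  linear_combination inner_tangent_normal_sq hc₁.ne' hc₂.ne' hP hA htan hN₀ hN₁

end Tangent

theorem confocal_tangent_segments_equal_angles_general
    (a₁ a₂ mu : ℝ) (ha : a₂ < a₁) (ha₂ : 0 < a₂) (hmu : 0 < mu)
    (P A B N : EuclideanSpace ℝ (Fin 2))
    (hP : (P 0) ^ 2 / (a₁ ^ 2 + mu) + (P 1) ^ 2 / (a₂ ^ 2 + mu) = 1)
    (hAγ : (A 0) ^ 2 / a₁ ^ 2 + (A 1) ^ 2 / a₂ ^ 2 = 1)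
    (hBγ : (B 0) ^ 2 / a₁ ^ 2 + (B 1) ^ 2 / a₂ ^ 2 = 1)
    (htanA : (P 0 - A 0) * (A 0 / a₁ ^ 2) + (P 1 - A 1) * (A 1 / a₂ ^ 2) = 0)
    (htanB : (P 0 - B 0) * (B 0 / a₁ ^ 2) + (P 1 - B 1) * (B 1 / a₂ ^ 2) = 0)
    (hN0 : N 0 = P 0 / (a₁ ^ 2 + mu)) (hN1 : N 1 = P 1 / (a₂ ^ 2 + mu)) :
    ⟪‖A - P‖⁻¹ • (A - P), N⟫ = ⟪‖B - P‖⁻¹ • (B - P), N⟫ := by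
  have h₁ : a₁ ≠ 0 := (ha₂.trans ha).ne'
  rw [inner_unit_tangent_normal_eq h₁ ha₂.ne' hmu hP hAγ htanA hN0 hN1,
    inner_unit_tangent_normal_eq h₁ ha₂.ne' hmu hP hBγ htanB hN0 hN1]

/-- The two tangent segments from a point `P` of the confocal ellipse `Γ_μ` to
the inner ellipse `γ` make equal angles with `Γ_μ`: the normal to `Γ_μ` at `P`
bisects the angle between them. -/
theorem confocal_tangent_segments_equal_angles
    (a₁ a₂ mu : ℝ) (ha : a₂ < a₁) (ha₂ : 0 < a₂) (hmu : 0 < mu)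
    (P A B N : EuclideanSpace ℝ (Fin 2))
    (hP : (P 0) ^ 2 / (a₁ ^ 2 + mu) + (P 1) ^ 2 / (a₂ ^ 2 + mu) = 1)
    (hAγ : (A 0) ^ 2 / a₁ ^ 2 + (A 1) ^ 2 / a₂ ^ 2 = 1)
    (hBγ : (B 0) ^ 2 / a₁ ^ 2 + (B 1) ^ 2 / a₂ ^ 2 = 1)
    (hAB : A ≠ B)
    (htanA : (P 0 - A 0) * (A 0 / a₁ ^ 2) + (P 1 - A 1) * (A 1 / a₂ ^ 2) = 0)
    (htanB : (P 0 - B 0) * (B 0 / a₁ ^ 2) + (P 1 - B 1) * (B 1 / a₂ ^ 2) = 0)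
    (hN0 : N 0 = P 0 / (a₁ ^ 2 + mu)) (hN1 : N 1 = P 1 / (a₂ ^ 2 + mu)) :
    ⟪‖A - P‖⁻¹ • (A - P), N⟫ = ⟪‖B - P‖⁻¹ • (B - P), N⟫ :=
  confocal_tangent_segments_equal_angles_general a₁ a₂ mu ha ha₂ hmu P A B N hP hAγ hBγ htanA htanB
    hN0 hN1
end
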